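/- For every natural number k ≥ 2: sup over finite unit-distance graphs g of m_k(g) ≤ inf over periodic k-colorings c of p^per(c) ≤ 1/k. (Theorem 1 of the paper.) -/

import Mathlib

open MeasureTheory Real

noncomputable section

abbrev Plane := EuclideanSpace ℝ (Fin 2)

def vec (x y : ℝ) : Plane := (WithLp.equiv 2 (Fin 2 → ℝ)).symm ![x, y]

def dir (θ : ℝ) : Plane := vec (Real.cos θ) (Real.sin θ)

/-- The fundamental parallelogram `{t•u + s•v : 0 ≤ t, s < 1}`. -/
def para (u v : Plane) : Set Plane :=
  {x | ∃ t s : ℝ, 0 ≤ t ∧ t < 1 ∧ 0 ≤ s ∧ s < 1 ∧ x = t • u + s • v}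

/-- `p^per(c)` for a periodic coloring with fundamental parallelogram `para u v`. -/
def pper {k : ℕ} (c : Plane → Fin k) (u v : Plane) : ℝ :=
  (1 / (2 * π * (volume (para u v)).toReal)) *
    ∫ a in para u v, ∫ θ in (0:ℝ)..(2*π),
      (if c a = c (a + dir θ) then (1:ℝ) else 0)

-- Number of monochromatic edges of `G` under the vertex coloring `χ`.
open Classical in
def monoCount {V : Type} [Fintype V] {k : ℕ} (G : SimpleGraph V) (χ : V → Fin k) : ℕ :=
  (G.edgeFinset.filter fun e => (e.map χ).IsDiag).card

-- `m_k(G)`: the least fraction of monochromatic edges over all `k`-colorings of `G`.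
open Classical in
def mval {V : Type} [Fintype V] (k : ℕ) (G : SimpleGraph V) : ℝ :=
  ⨅ χ : V → Fin k, (monoCount G χ : ℝ) / (G.edgeFinset.card : ℝ)

/-!
Lower bound: move a unit-distance embedding `f` of `G` by a uniformly random rigid motion
(angle uniform in `(0, 2π]`, translation uniform in the fundamental parallelogram) and colour each
vertex by the periodic colouring `c`. By periodicity and rotation invariance the two ends of every
edge then get the same colour with probability exactly `p^per(c)`, so the expected fraction of
monochromatic edges is `p^per(c)` and some colouring of `G` does at least as well.

Upper bound: colour the squares of side `1/2` by a uniformly random `σ : (ℤ/4)² → Fin k`, which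
gives colourings with periods `(2, 0)` and `(0, 2)`. Two points at unit distance never lie in
squares of the same class, so they get the same colour with probability `1/k`, and some `σ`
does at least as well.
-/

namespace UnitDistanceColoring

open Set Function
open scoped Finset

@[simp] lemma vec_apply_zero (x y : ℝ) : vec x y 0 = x := rfl
@[simp] lemma vec_apply_one (x y : ℝ) : vec x y 1 = y := rfl

lemma plane_ext {x y : Plane} (h0 : x 0 = y 0) (h1 : x 1 = y 1) : x = y := by
  ext i
  fin_cases i
  exacts [h0, h1]

lemma vec_eq_smul_add_smul (x y : ℝ) : vec x y = x • vec 1 0 + y • vec 0 1 :=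
  plane_ext (by simp) (by simp)

lemma continuous_vec {X : Type*} [TopologicalSpace X] {f g : X → ℝ} (hf : Continuous f)
    (hg : Continuous g) : Continuous fun x => vec (f x) (g x) := by
  simp_rw [vec_eq_smul_add_smul (f _)]
  fun_prop

lemma dir_periodic : Periodic dir (2 * π) := fun θ => by
  rw [dir, dir, cos_add_two_pi, sin_add_two_pi]

lemma continuous_dir : Continuous dir :=
  continuous_vec continuous_cos continuous_sin

lemma exists_eq_dir_of_norm_eq_one {w : Plane} (hw : ‖w‖ = 1) : ∃ φ, w = dir φ := by
  have hsq : w 0 ^ 2 + w 1 ^ 2 = 1 := by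
    simpa [Fin.sum_univ_two, hw] using (EuclideanSpace.real_norm_sq_eq w).symm
  obtain ⟨φ, hφ⟩ := (Complex.norm_eq_one_iff ⟨w 0, w 1⟩).1 <| by
    rw [Complex.norm_def, Complex.normSq_mk, ← sq, ← sq, hsq, sqrt_one]
  refine ⟨φ, plane_ext ?_ ?_⟩
  · simpa [dir] using (congrArg Complex.re hφ).symm
  · simpa [dir] using (congrArg Complex.im hφ).symm

def rot (θ : ℝ) (x : Plane) : Plane :=
  vec (cos θ * x 0 - sin θ * x 1) (sin θ * x 0 + cos θ * x 1)

lemma rot_sub (θ : ℝ) (x y : Plane) : rot θ (x - y) = rot θ x - rot θ y :=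
  plane_ext (by simp [rot]; ring) (by simp [rot]; ring)

lemma rot_dir (θ φ : ℝ) : rot θ (dir φ) = dir (θ + φ) :=
  plane_ext (by simp [rot, dir, cos_add]) (by simp [rot, dir, sin_add])

def motion (z : Plane × ℝ) (x : Plane) : Plane := rot z.2 x + z.1

lemma continuous_motion (x : Plane) : Continuous fun z : Plane × ℝ => motion z x := by
  unfold motion rot
  exact (continuous_vec (by fun_prop) (by fun_prop)).add continuous_fst

lemma exists_motion_eq_add_dir {p q : Plane} (hpq : dist p q = 1) :
    ∃ φ, ∀ z, motion z q = motion z p + dir (z.2 + φ) := by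
  obtain ⟨φ, hφ⟩ := exists_eq_dir_of_norm_eq_one (w := q - p) (by rwa [← dist_eq_norm, dist_comm])
  refine ⟨φ, fun z => ?_⟩
  rw [motion, motion, ← rot_dir, ← hφ, rot_sub]
  abel

section Parallelogram

open Submodule Pointwise

variable {u v : Plane}

def paraBasis (h : LinearIndependent ℝ ![u, v]) : Module.Basis (Fin 2) ℝ Plane :=
  basisOfLinearIndependentOfCardEqFinrank h (by simp)

@[simp] lemma paraBasis_apply (h : LinearIndependent ℝ ![u, v]) (i : Fin 2) :
    paraBasis h i = ![u, v] i := by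
  simp [paraBasis, coe_basisOfLinearIndependentOfCardEqFinrank]

lemma para_eq_fundamentalDomain (h : LinearIndependent ℝ ![u, v]) :
    para u v = ZSpan.fundamentalDomain (paraBasis h) := by
  ext x
  have hx : x = (paraBasis h).repr x 0 • u + (paraBasis h).repr x 1 • v := by
    simpa [Fin.sum_univ_two] using ((paraBasis h).sum_repr x).symm
  constructor
  · rintro ⟨t, s, ht0, ht1, hs0, hs1, rfl⟩ i
    rw [show t • u + s • v = t • paraBasis h 0 + s • paraBasis h 1 by simp, map_add,
      map_smul, map_smul, Module.Basis.repr_self, Module.Basis.repr_self]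
    fin_cases i <;> simp [ht0, ht1, hs0, hs1]
  · intro hx'
    exact ⟨_, _, (hx' 0).1, (hx' 0).2, (hx' 1).1, (hx' 1).2, hx⟩

lemma measurableSet_para (h : LinearIndependent ℝ ![u, v]) : MeasurableSet (para u v) := by
  rw [para_eq_fundamentalDomain h]
  exact ZSpan.fundamentalDomain_measurableSet _

lemma volume_para_ne_zero (h : LinearIndependent ℝ ![u, v]) : volume (para u v) ≠ 0 := by
  rw [para_eq_fundamentalDomain h]
  exact ZSpan.measure_fundamentalDomain_ne_zero _

lemma volume_para_ne_top (h : LinearIndependent ℝ ![u, v]) : volume (para u v) ≠ ⊤ := by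
  rw [para_eq_fundamentalDomain h]
  exact (ZSpan.fundamentalDomain_isBounded _).measure_lt_top.ne

lemma periodic_of_mem_span {G β : Type*} [AddCommGroup G] {F : G → β} {s : Set G}
    (hs : ∀ w ∈ s, Periodic F w) {l : G} (hl : l ∈ span ℤ s) : Periodic F l := by
  induction hl using span_induction with
  | mem w hw => exact hs w hw
  | zero => exact fun x => by rw [add_zero]
  | add y z _ _ hy hz => exact hy.add_period hz
  | smul n y _ hy => exact hy.zsmul n

lemma setIntegral_para_add_left {E : Type*} [NormedAddCommGroup E] [NormedSpace ℝ E]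
    (h : LinearIndependent ℝ ![u, v]) {F : Plane → E}
    (hu : Periodic F u) (hv : Periodic F v) (t : Plane) :
    ∫ x in para u v, F (t + x) = ∫ x in para u v, F x := by
  rw [para_eq_fundamentalDomain h]
  set D := ZSpan.fundamentalDomain (paraBasis h)
  have hD := ZSpan.isAddFundamentalDomain' (paraBasis h) volume
  have : Countable (span ℤ (range (paraBasis h))).toAddSubgroup :=
    inferInstanceAs (Countable (span ℤ (range (paraBasis h))))
  have hinv : ∀ (l : (span ℤ (range (paraBasis h))).toAddSubgroup) (x : Plane),
      F (l +ᵥ x) = F x := by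
    rintro ⟨l, hl⟩ x
    change F (l + x) = F x
    rw [add_comm]
    refine periodic_of_mem_span ?_ hl x
    rintro _ ⟨i, rfl⟩
    fin_cases i
    exacts [by simpa using hu, by simpa using hv]
  calc ∫ x in D, F (t + x)
      = ∫ x in t +ᵥ D, F x :=
        ((measurePreserving_vadd t volume).setIntegral_image_emb
          (measurableEmbedding_const_vadd t) F D).symm
    _ = ∫ x in D, F x := (hD.vadd_of_comm t).setIntegral_eq hD hinv

end Parallelogram

lemma integral_Ioc_comp_add_right_of_periodic {E : Type*} [NormedAddCommGroup E]
    [NormedSpace ℝ E] {f : ℝ → E} {T : ℝ} (hf : Periodic f T)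
    (hT : 0 ≤ T) (φ : ℝ) : ∫ x in Ioc 0 T, f (x + φ) = ∫ x in Ioc 0 T, f x := by
  rw [← intervalIntegral.integral_of_le hT, ← intervalIntegral.integral_of_le hT,
    intervalIntegral.integral_comp_add_right, zero_add, add_comm T φ]
  simpa using hf.intervalIntegral_add_eq φ 0

section SameColor

variable {k : ℕ} {c : Plane → Fin k}

def sameColor (c : Plane → Fin k) (x y : Plane) : ℝ := if c x = c y then 1 else 0

lemma sameColor_nonneg (x y : Plane) : 0 ≤ sameColor c x y := by
  unfold sameColor; split_ifs <;> norm_num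

lemma sameColor_le_one (x y : Plane) : sameColor c x y ≤ 1 := by
  unfold sameColor; split_ifs <;> norm_num

lemma sameColor_add_right_of_periodic {w : Plane} (hw : Periodic c w) (x y : Plane) :
    sameColor c (x + w) (y + w) = sameColor c x y := by
  rw [sameColor, sameColor, hw, hw]

lemma integrable_sameColor {X : Type*} [MeasurableSpace X] {μ : Measure X} [IsFiniteMeasure μ]
    (hc : Measurable c) {f g : X → Plane} (hf : Measurable f) (hg : Measurable g) :
    Integrable (fun x => sameColor c (f x) (g x)) μ := by
  refine Integrable.of_bound (C := 1) ?_ (ae_of_all _ fun x => ?_)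
  · exact (Measurable.ite (measurableSet_eq_fun (hc.comp hf) (hc.comp hg)) measurable_const
      measurable_const).aestronglyMeasurable
  · rw [Real.norm_of_nonneg (sameColor_nonneg _ _)]
    exact sameColor_le_one _ _

end SameColor

section MotionMeasure

variable {u v : Plane} {k : ℕ} {c : Plane → Fin k}

def motionVolume (u v : Plane) : Measure (Plane × ℝ) :=
  (volume.restrict (para u v)).prod (volume.restrict (Ioc 0 (2 * π)))

def motionMeasure (u v : Plane) : Measure (Plane × ℝ) :=
  (motionVolume u v univ)⁻¹ • motionVolume u v

lemma motionVolume_univ : motionVolume u v univ = volume (para u v) * ENNReal.ofReal (2 * π) := by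
  rw [motionVolume, ← univ_prod_univ, Measure.prod_prod, Measure.restrict_apply_univ,
    Measure.restrict_apply_univ, Real.volume_Ioc, sub_zero]

lemma isFiniteMeasure_motionVolume (h : LinearIndependent ℝ ![u, v]) :
    IsFiniteMeasure (motionVolume u v) :=
  ⟨by
    rw [motionVolume_univ]
    exact ENNReal.mul_lt_top (volume_para_ne_top h).lt_top ENNReal.ofReal_lt_top⟩

lemma isProbabilityMeasure_motionMeasure (h : LinearIndependent ℝ ![u, v]) :
    IsProbabilityMeasure (motionMeasure u v) := by
  have := isFiniteMeasure_motionVolume h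
  have : NeZero (motionVolume u v) := ⟨fun h0 => by
    rw [← Measure.measure_univ_eq_zero, motionVolume_univ, mul_eq_zero,
      ENNReal.ofReal_eq_zero] at h0
    exact h0.elim (volume_para_ne_zero h) two_pi_pos.not_ge⟩
  exact isProbabilityMeasureSMul

lemma integral_motionVolume {f : Plane × ℝ → ℝ} (hf : Integrable f (motionVolume u v)) :
    ∫ z, f z ∂motionVolume u v = ∫ θ in Ioc 0 (2 * π), ∫ a in para u v, f (a, θ) :=
  integral_prod_symm f hf

lemma measurable_add_dir : Measurable fun z : Plane × ℝ => z.1 + dir z.2 :=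
  (continuous_fst.add (continuous_dir.comp continuous_snd)).measurable

lemma pper_eq_integral (h : LinearIndependent ℝ ![u, v]) (hc : Measurable c) :
    pper c u v = ∫ z, sameColor c z.1 (z.1 + dir z.2) ∂motionMeasure u v := by
  have := isFiniteMeasure_motionVolume h
  have hint := integrable_sameColor (μ := motionVolume u v) hc measurable_fst measurable_add_dir
  rw [motionMeasure, integral_smul_measure, motionVolume_univ, motionVolume,
    integral_prod _ hint, ENNReal.toReal_inv, ENNReal.toReal_mul,
    ENNReal.toReal_ofReal two_pi_pos.le, pper, smul_eq_mul, one_div, mul_comm _ (2 * π)]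
  congr 1
  refine setIntegral_congr_fun (measurableSet_para h) fun a _ => ?_
  exact intervalIntegral.integral_of_le two_pi_pos.le

lemma pper_nonneg (h : LinearIndependent ℝ ![u, v]) (hc : Measurable c) : 0 ≤ pper c u v := by
  have := isProbabilityMeasure_motionMeasure h
  rw [pper_eq_integral h hc]
  exact integral_nonneg fun _ => sameColor_nonneg _ _

/-- A random rigid motion carries two points at unit distance to a pair distributed like
`(a, a + dir θ)`. -/
lemma integral_sameColor_motion (hc : Measurable c) (h : LinearIndependent ℝ ![u, v])
    (hu : Periodic c u) (hv : Periodic c v) {p q : Plane} (hpq : dist p q = 1) :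
    ∫ z, sameColor c (motion z p) (motion z q) ∂motionMeasure u v = pper c u v := by
  have := isFiniteMeasure_motionVolume h
  obtain ⟨φ, hφ⟩ := exists_motion_eq_add_dir hpq
  set H : ℝ → ℝ := fun ψ => ∫ a in para u v, sameColor c a (a + dir ψ)
  have hH : Periodic H (2 * π) := fun ψ => by simp only [H, dir_periodic ψ]
  have hshift (θ : ℝ) :
      ∫ a in para u v, sameColor c (motion (a, θ) p) (motion (a, θ) q) = H (θ + φ) := by
    simp_rw [hφ]
    exact setIntegral_para_add_left h (F := fun x => sameColor c x (x + dir (θ + φ)))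
      (fun x => by simp only [add_right_comm x u, sameColor_add_right_of_periodic hu])
      (fun x => by simp only [add_right_comm x v, sameColor_add_right_of_periodic hv])
      (rot θ p)
  have hpq_int := integrable_sameColor (μ := motionVolume u v) hc
    (continuous_motion p).measurable (continuous_motion q).measurable
  have hdir_int := integrable_sameColor (μ := motionVolume u v) hc measurable_fst measurable_add_dir
  rw [pper_eq_integral h hc, motionMeasure, integral_smul_measure, integral_smul_measure,
    integral_motionVolume hpq_int, integral_motionVolume hdir_int]
  simp_rw [hshift]
  rw [integral_Ioc_comp_add_right_of_periodic hH two_pi_pos.le]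

end MotionMeasure

section LowerBound

variable {V : Type} [Fintype V] {k : ℕ}

open Classical in
lemma mval_le_div (G : SimpleGraph V) (χ : V → Fin k) :
    mval k G ≤ monoCount G χ / #G.edgeFinset :=
  ciInf_le ⟨0, by rintro _ ⟨χ', rfl⟩; positivity⟩ χ

theorem mval_le_pper (G : SimpleGraph V) (hG : G.edgeSet.Nonempty) {f : V → Plane}
    (hf : ∀ i j, G.Adj i j → dist (f i) (f j) = 1) {c : Plane → Fin k} {u v : Plane}
    (hc : Measurable c) (h : LinearIndependent ℝ ![u, v]) (hu : Periodic c u)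
    (hv : Periodic c v) :
    mval k G ≤ pper c u v := by
  classical
  have := isProbabilityMeasure_motionMeasure h
  let χ : Plane × ℝ → V → Fin k := fun z i => c (motion z (f i))
  let mono : Sym2 V → Plane × ℝ → ℝ := fun e z => if (e.map (χ z)).IsDiag then 1 else 0
  have hmono : ∀ e ∈ G.edgeFinset, Integrable (mono e) (motionMeasure u v) ∧
      ∫ z, mono e z ∂motionMeasure u v = pper c u v := by
    intro e he
    induction e using Sym2.ind with | h i j =>
    have hmono_eq : mono s(i, j) = fun z => sameColor c (motion z (f i)) (motion z (f j)) := by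
      ext z
      simp only [mono, χ, Sym2.map_mk, Sym2.mk_isDiag_iff, sameColor]
    rw [hmono_eq]
    exact ⟨integrable_sameColor hc (continuous_motion _).measurable
        (continuous_motion _).measurable,
      integral_sameColor_motion hc h hu hv (hf i j (G.mem_edgeFinset.1 he))⟩
  have hE : (0 : ℝ) < #G.edgeFinset := by
    exact_mod_cast Finset.card_pos.2 ⟨_, G.mem_edgeFinset.2 hG.some_mem⟩
  have hcount (z : Plane × ℝ) : (monoCount G (χ z) : ℝ) = ∑ e ∈ G.edgeFinset, mono e z :=
    Finset.natCast_card_filter _ _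
  have key : mval k G * #G.edgeFinset ≤ pper c u v * #G.edgeFinset := calc
    mval k G * #G.edgeFinset = ∫ _, mval k G * #G.edgeFinset ∂motionMeasure u v := by simp
    _ ≤ ∫ z, ∑ e ∈ G.edgeFinset, mono e z ∂motionMeasure u v :=
      integral_mono (integrable_const _) (integrable_finsetSum _ fun e he => (hmono e he).1)
        fun z => hcount z ▸ (le_div_iff₀ hE).1 (mval_le_div G (χ z))
    _ = pper c u v * #G.edgeFinset := by
      rw [integral_finsetSum _ fun e he => (hmono e he).1,
        Finset.sum_congr rfl fun e he => (hmono e he).2]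
      simp [mul_comm]
  exact le_of_mul_le_mul_right key hE

end LowerBound

section UpperBound

lemma card_filter_apply_eq_apply {Z α : Type*} [Fintype Z] [DecidableEq Z] [Fintype α]
    [DecidableEq α] {p q : Z} (hpq : p ≠ q) :
    #{σ : Z → α | σ p = σ q} = Fintype.card α ^ (Fintype.card Z - 1) := by
  let e : {σ : Z → α // σ p = σ q} ≃ ({z // z ≠ q} → α) :=
    { toFun σ z := σ.1 z
      invFun τ := ⟨fun z => if hz : z = q then τ ⟨p, hpq⟩ else τ ⟨z, hz⟩, by simp [hpq]⟩
      left_inv σ := by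
        ext z
        by_cases hz : z = q
        · subst hz; simp [σ.2]
        · simp [hz]
      right_inv τ := by
        ext z
        simp [z.2] }
  rw [← Fintype.card_subtype, Fintype.card_congr e, Fintype.card_fun, Fintype.card_subtype_compl,
    Fintype.card_subtype_eq]

def gridU : Plane := vec 2 0
def gridV : Plane := vec 0 2

lemma linearIndependent_gridU_gridV : LinearIndependent ℝ ![gridU, gridV] := by
  rw [LinearIndependent.pair_iff]
  intro s t hst
  have h0 := congrArg (· 0) hst
  have h1 := congrArg (· 1) hst
  simp [gridU, gridV] at h0 h1
  exact ⟨h0, h1⟩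

/-- The square of side `1/2` containing `x`, as a residue class of `ℤ² / 4ℤ²`. -/
def cell (x : Plane) : ZMod 4 × ZMod 4 := (⌊2 * x 0⌋, ⌊2 * x 1⌋)

def gridColoring {k : ℕ} (σ : ZMod 4 × ZMod 4 → Fin k) (x : Plane) : Fin k := σ (cell x)

variable {k : ℕ}

lemma measurable_gridColoring (σ : ZMod 4 × ZMod 4 → Fin k) : Measurable (gridColoring σ) := by
  have hfloor (i : Fin 2) : Measurable fun x : Plane => ⌊2 * x i⌋ :=
    (measurable_const.mul (by fun_prop)).floor
  exact (measurable_of_countable fun n : ℤ × ℤ => σ (n.1, n.2)).comp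
    ((hfloor 0).prodMk (hfloor 1))

lemma intCast_floor_two_mul_add_two (t : ℝ) :
    ((⌊2 * (t + 2)⌋ : ℤ) : ZMod 4) = ⌊2 * t⌋ := by
  rw [show 2 * (t + 2) = 2 * t + (4 : ℤ) by push_cast; ring, Int.floor_add_intCast, Int.cast_add,
    show ((4 : ℤ) : ZMod 4) = 0 by decide, add_zero]

lemma periodic_gridColoring_gridU (σ : ZMod 4 × ZMod 4 → Fin k) :
    Periodic (gridColoring σ) gridU := fun x => by
  simp [gridColoring, cell, gridU, intCast_floor_two_mul_add_two]

lemma periodic_gridColoring_gridV (σ : ZMod 4 × ZMod 4 → Fin k) :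
    Periodic (gridColoring σ) gridV := fun x => by
  simp [gridColoring, cell, gridV, intCast_floor_two_mul_add_two]

lemma abs_lt_half_of_intCast_floor_eq {x y : ℝ} (hy : |y| ≤ 1)
    (hxy : ((⌊2 * (x + y)⌋ : ℤ) : ZMod 4) = ⌊2 * x⌋) : |y| < 1 / 2 := by
  have hmod := (ZMod.intCast_eq_intCast_iff' _ _ _).mp hxy
  have h1 := Int.floor_le (2 * (x + y))
  have h2 := Int.lt_floor_add_one (2 * (x + y))
  have h3 := Int.floor_le (2 * x)
  have h4 := Int.lt_floor_add_one (2 * x)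
  obtain ⟨hy1, hy2⟩ := abs_le.mp hy
  have hlt : ⌊2 * (x + y)⌋ < ⌊2 * x⌋ + 3 := by
    have : (⌊2 * (x + y)⌋ : ℝ) < ((⌊2 * x⌋ + 3 : ℤ) : ℝ) := by push_cast; linarith
    exact_mod_cast this
  have hgt : ⌊2 * x⌋ - 3 < ⌊2 * (x + y)⌋ := by
    have : ((⌊2 * x⌋ - 3 : ℤ) : ℝ) < ⌊2 * (x + y)⌋ := by push_cast; linarith
    exact_mod_cast this
  have heq : ⌊2 * (x + y)⌋ = ⌊2 * x⌋ := by omega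
  rw [heq] at h1 h2
  rw [abs_lt]
  constructor <;> linarith

lemma cell_ne_cell_add_dir (a : Plane) (θ : ℝ) : cell a ≠ cell (a + dir θ) := by
  intro hcell
  have hc := abs_lt_half_of_intCast_floor_eq (abs_cos_le_one θ)
    (by simpa [cell, dir] using (congrArg Prod.fst hcell).symm)
  have hs := abs_lt_half_of_intCast_floor_eq (abs_sin_le_one θ)
    (by simpa [cell, dir] using (congrArg Prod.snd hcell).symm)
  nlinarith [sin_sq_add_cos_sq θ, sq_abs (cos θ), sq_abs (sin θ), abs_nonneg (cos θ),
    abs_nonneg (sin θ)]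

lemma sum_sameColor_gridColoring (a : Plane) (θ : ℝ) :
    ∑ σ : ZMod 4 × ZMod 4 → Fin k, sameColor (gridColoring σ) a (a + dir θ) = (k : ℝ) ^ 15 := by
  have hcard := card_filter_apply_eq_apply (α := Fin k) (cell_ne_cell_add_dir a θ)
  simp only [Fintype.card_fin, Fintype.card_prod, ZMod.card] at hcard
  simp only [sameColor, Finset.sum_boole]
  exact_mod_cast hcard

theorem exists_pper_gridColoring_le (hk : 0 < k) :
    ∃ σ : ZMod 4 × ZMod 4 → Fin k, pper (gridColoring σ) gridU gridV ≤ 1 / k := by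
  have := isProbabilityMeasure_motionMeasure linearIndependent_gridU_gridV
  have : NeZero k := ⟨hk.ne'⟩
  have hsum : ∑ σ : ZMod 4 × ZMod 4 → Fin k, pper (gridColoring σ) gridU gridV =
      ∑ _σ : ZMod 4 × ZMod 4 → Fin k, (1 / k : ℝ) := by
    simp_rw [pper_eq_integral linearIndependent_gridU_gridV (measurable_gridColoring _)]
    rw [← integral_finsetSum _ fun σ _ => integrable_sameColor (measurable_gridColoring σ)
      measurable_fst measurable_add_dir]
    simp_rw [sum_sameColor_gridColoring]
    simp only [integral_const, probReal_univ, one_smul, Finset.sum_const, Finset.card_univ,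
      Fintype.card_fun, Fintype.card_prod, Fintype.card_fin, ZMod.card, nsmul_eq_mul]
    field_simp
    norm_num
  obtain ⟨σ, -, hσ⟩ := Finset.exists_le_of_sum_le Finset.univ_nonempty hsum.le
  exact ⟨σ, hσ⟩

end UpperBound

end UnitDistanceColoring

open UnitDistanceColoring

theorem stmt2 (k : ℕ) (hk : 2 ≤ k) :
    sSup {x : ℝ | ∃ (n : ℕ) (G : SimpleGraph (Fin n)),
        G.edgeSet.Nonempty ∧
        (∃ f : Fin n → Plane, ∀ i j : Fin n, G.Adj i j → dist (f i) (f j) = 1) ∧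
        x = mval k G} ≤
      sInf {x : ℝ | ∃ (c : Plane → Fin k) (u v : Plane), Measurable c ∧
        LinearIndependent ℝ ![u, v] ∧
        (∀ y : Plane, c (y + u) = c y ∧ c (y + v) = c y) ∧
        x = pper c u v} ∧
    sInf {x : ℝ | ∃ (c : Plane → Fin k) (u v : Plane), Measurable c ∧
        LinearIndependent ℝ ![u, v] ∧
        (∀ y : Plane, c (y + u) = c y ∧ c (y + v) = c y) ∧
        x = pper c u v} ≤ 1 / k := by
  set T := {x : ℝ | ∃ (c : Plane → Fin k) (u v : Plane), Measurable c ∧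
    LinearIndependent ℝ ![u, v] ∧ (∀ y : Plane, c (y + u) = c y ∧ c (y + v) = c y) ∧
    x = pper c u v}
  have hnonneg : ∀ x ∈ T, 0 ≤ x := by
    rintro _ ⟨c, u, v, hc, h, -, rfl⟩
    exact pper_nonneg h hc
  obtain ⟨σ, hσ⟩ := exists_pper_gridColoring_le (k := k) (by omega)
  have hgrid : pper (gridColoring σ) gridU gridV ∈ T :=
    ⟨_, _, _, measurable_gridColoring σ, linearIndependent_gridU_gridV,
      fun y => ⟨periodic_gridColoring_gridU σ y, periodic_gridColoring_gridV σ y⟩, rfl⟩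
  refine ⟨Real.sSup_le ?_ (le_csInf ⟨_, hgrid⟩ hnonneg), (csInf_le ⟨0, hnonneg⟩ hgrid).trans hσ⟩
  rintro _ ⟨n, G, hG, ⟨f, hf⟩, rfl⟩
  refine le_csInf ⟨_, hgrid⟩ ?_
  rintro _ ⟨c, u, v, hc, h, hper, rfl⟩
  exact mval_le_pper G hG hf hc h (fun y => (hper y).1) (fun y => (hper y).2)

end
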